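/- Let f₀ minimize H_C over F_M and let E₀ be its multiplier. Then for every f ∈ F_M: H_C(f) − H_C(f₀) = d(f,f₀) − (1/8π) ∫ |∇U_f − ∇U_{f₀}|² dx, where d(f,f₀) = ∫∫[(f^{1+1/k} − f₀^{1+1/k})(L−L₀)₊^{−l/k} + (E−E₀)(f−f₀)] dv dx and E = |v|²/2 + U₀(x) − M_c/|x|. -/

import Mathlib

open MeasureTheory Real

noncomputable section

abbrev E3 := EuclideanSpace ℝ (Fin 3)

def Lfun (x v : E3) : ℝ := ‖x‖ ^ 2 * ‖v‖ ^ 2 - (inner ℝ x v : ℝ) ^ 2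

/-- The spatial density induced by a phase-space density. -/
def rhoF (f : E3 → E3 → ℝ) (x : E3) : ℝ := ∫ v, f x v

def mF (f : E3 → E3 → ℝ) (r : ℝ) : ℝ := ∫ x in Metric.closedBall (0 : E3) r, rhoF f x

/-- The radial gradient field `∇U_f(x) = (m(|x|)/|x|²) x/|x|`. -/
def gradUF (f : E3 → E3 → ℝ) (x : E3) : E3 := (mF f ‖x‖ / ‖x‖ ^ 3) • x

/-- The potential `U_f(x) = −∫_{|x|}^∞ m(s)/s² ds`. -/
def UF (f : E3 → E3 → ℝ) (x : E3) : ℝ := -∫ s in Set.Ioi ‖x‖, mF f s / s ^ 2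

/-- Kinetic energy. -/
def Ekin (f : E3 → E3 → ℝ) : ℝ := (1/2) * ∫ x, ∫ v, ‖v‖ ^ 2 * f x v

/-- Potential energy, including the interaction with the central point mass `M_c`. -/
def Epot (M_c : ℝ) (f : E3 → E3 → ℝ) : ℝ :=
  -(1 / (8 * π)) * (∫ x, ‖gradUF f x‖ ^ 2) - ∫ x, (M_c / ‖x‖) * rhoF f x

/-- The Casimir functional. -/
def Cas (k l L₀ : ℝ) (f : E3 → E3 → ℝ) : ℝ :=
  ∫ x, ∫ v, f x v ^ (1 + 1 / k) * (max (Lfun x v - L₀) 0) ^ (-(l / k))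

/-- The energy–Casimir functional. -/
def HC (k l L₀ M_c : ℝ) (f : E3 → E3 → ℝ) : ℝ := Ekin f + Epot M_c f + Cas k l L₀ f

/-- The constraint set `F_M`. -/
def FM (k l L₀ M : ℝ) (f : E3 → E3 → ℝ) : Prop :=
  Measurable (Function.uncurry f) ∧ (∀ x v, 0 ≤ f x v) ∧
  (∀ (A : E3 ≃ₗᵢ[ℝ] E3) (x v : E3), f (A x) (A v) = f x v) ∧
  Integrable (Function.uncurry f) ∧ (∫ x, ∫ v, f x v) = M ∧
  Integrable (fun z : E3 × E3 => ‖z.2‖ ^ 2 * f z.1 z.2) ∧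
  Integrable (fun z : E3 × E3 =>
    f z.1 z.2 ^ (1 + 1 / k) * (max (Lfun z.1 z.2 - L₀) 0) ^ (-(l / k))) ∧
  (∀ᵐ z : E3 × E3, Lfun z.1 z.2 < L₀ → f z.1 z.2 = 0)

/-- The microscopic energy `E = |v|²/2 + U₀(x) − M_c/|x|` induced by `f₀`. -/
def Emic (M_c : ℝ) (f₀ : E3 → E3 → ℝ) (x v : E3) : ℝ :=
  ‖v‖ ^ 2 / 2 + UF f₀ x - M_c / ‖x‖

/-- The distance functional `d(f,f₀)`. -/
def dfun (k l L₀ M_c E₀ : ℝ) (f f₀ : E3 → E3 → ℝ) : ℝ :=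
  ∫ x, ∫ v,
    ((f x v ^ (1 + 1 / k) - f₀ x v ^ (1 + 1 / k)) * (max (Lfun x v - L₀) 0) ^ (-(l / k))
      + (Emic M_c f₀ x v - E₀) * (f x v - f₀ x v))

set_option linter.unusedSectionVars false

namespace HCP
open Set Function

variable {f g h : E3 → E3 → ℝ} {k l L₀ M M_c : ℝ}

/-- kinetic density -/
def Tf (f : E3 → E3 → ℝ) (x : E3) : ℝ := ∫ v, ‖v‖ ^ 2 * f x v

def Ttot (f : E3 → E3 → ℝ) : ℝ := ∫ x, Tf f x

lemma vol_prod : (volume : Measure (E3 × E3)) = (volume : Measure E3).prod volume := rfl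

section basic

variable (hmeas : Measurable (Function.uncurry f))
    (hpos : ∀ x v, 0 ≤ f x v)
    (hint : Integrable (Function.uncurry f))
    (hkin : Integrable (fun z : E3 × E3 => ‖z.2‖ ^ 2 * f z.1 z.2))

include hmeas in
lemma rho_meas : StronglyMeasurable (rhoF f) :=
  hmeas.stronglyMeasurable.integral_prod_right'

include hpos in
lemma rho_nonneg (x : E3) : 0 ≤ rhoF f x := integral_nonneg (hpos x)

include hint in
lemma rho_int : Integrable (rhoF f) := hint.integral_prod_left

include hmeas in
lemma Tf_meas : StronglyMeasurable (Tf f) := by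
  have : Measurable (fun z : E3 × E3 => ‖z.2‖ ^ 2 * f z.1 z.2) :=
    ((measurable_snd.norm.pow measurable_const)).mul hmeas
  exact this.stronglyMeasurable.integral_prod_right'

include hpos in
lemma Tf_nonneg (x : E3) : 0 ≤ Tf f x :=
  integral_nonneg (fun v => mul_nonneg (by positivity) (hpos x v))

include hkin in
lemma Tf_int : Integrable (Tf f) := hkin.integral_prod_left

include hpos hkin in
lemma Ttot_nonneg : 0 ≤ Ttot f := integral_nonneg (Tf_nonneg hpos)

lemma mF_nonpos (hr : r ≤ 0) : mF f r = 0 := by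
  rcases lt_or_eq_of_le hr with hr' | hr'
  · rw [mF, Metric.closedBall_eq_empty.2 hr', Measure.restrict_empty, integral_zero_measure]
  · subst hr'
    rw [mF, Metric.closedBall_zero]
    have : (volume : Measure E3) {(0:E3)} = 0 := measure_singleton _
    rw [Measure.restrict_eq_zero.2 this, integral_zero_measure]

include hpos in
lemma mF_nonneg (r : ℝ) : 0 ≤ mF f r :=
  setIntegral_nonneg measurableSet_closedBall (fun x _ => rho_nonneg hpos x)

include hpos hint in
lemma mF_mono : Monotone (mF f) := fun r r' hr =>
  setIntegral_mono_set (rho_int hint).integrableOn (Filter.Eventually.of_forall (rho_nonneg hpos))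
    (HasSubset.Subset.eventuallyLE (Metric.closedBall_subset_closedBall hr))

include hpos hint in
lemma mF_meas : Measurable (mF f) := (mF_mono hpos hint).measurable

include hpos hint in
lemma mF_le (hmass : (∫ x, ∫ v, f x v) = M) (r : ℝ) : mF f r ≤ M := by
  have : mF f r ≤ ∫ x, rhoF f x :=
    setIntegral_le_integral (rho_int hint) (Filter.Eventually.of_forall (rho_nonneg hpos))
  exact this.trans (le_of_eq hmass)

end basic

section kinbound

variable (hL₀ : 0 < L₀)
    (hpos : ∀ x v, 0 ≤ f x v)
    (hint : Integrable (Function.uncurry f))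
    (hkin : Integrable (fun z : E3 × E3 => ‖z.2‖ ^ 2 * f z.1 z.2))
    (hsupp : ∀ᵐ z : E3 × E3, Lfun z.1 z.2 < L₀ → f z.1 z.2 = 0)

include hL₀ hpos hint hkin hsupp in
lemma rho_le_kin : ∀ᵐ x : E3, rhoF f x ≤ ‖x‖ ^ 2 / L₀ * Tf f x := by
  rw [vol_prod] at hsupp
  have h1 : ∀ᵐ x : E3, ∀ᵐ v : E3, (Lfun x v < L₀ → f x v = 0) :=
    Measure.ae_ae_of_ae_prod hsupp
  have h2 : ∀ᵐ x : E3, Integrable (fun v => f x v) := by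
    have := hint
    rw [vol_prod] at this
    exact this.prod_right_ae
  have h3 : ∀ᵐ x : E3, Integrable (fun v => ‖v‖ ^ 2 * f x v) := by
    have := hkin
    rw [vol_prod] at this
    exact this.prod_right_ae
  filter_upwards [h1, h2, h3] with x hx hfi hki
  have hmono : ∀ᵐ v : E3, f x v ≤ ‖x‖ ^ 2 / L₀ * (‖v‖ ^ 2 * f x v) := by
    filter_upwards [hx] with v hv
    by_cases hLf : Lfun x v < L₀
    · rw [hv hLf]
      positivity
    · push_neg at hLf
      have hL2 : L₀ ≤ ‖x‖ ^ 2 * ‖v‖ ^ 2 := by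
        have := sq_nonneg (inner ℝ x v : ℝ)
        unfold Lfun at hLf
        nlinarith
      rw [div_mul_eq_mul_div, le_div_iff₀ hL₀]
      nlinarith [hpos x v]
  calc rhoF f x = ∫ v, f x v := rfl
    _ ≤ ∫ v, ‖x‖ ^ 2 / L₀ * (‖v‖ ^ 2 * f x v) :=
        integral_mono_ae hfi (hki.const_mul _) hmono
    _ = ‖x‖ ^ 2 / L₀ * Tf f x := integral_const_mul _ _

include hL₀ hpos hint hkin hsupp in
lemma mF_le_quad (hmeas : Measurable (Function.uncurry f)) (r : ℝ) :
    mF f r ≤ r ^ 2 / L₀ * Ttot f := by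
  have hTt : 0 ≤ Ttot f := Ttot_nonneg hpos hkin
  rcases le_or_gt r 0 with hr | hr
  · rw [mF_nonpos hr]
    positivity
  · have hTm := Tf_meas hmeas
    have hTi := Tf_int hkin
    have step1 : mF f r ≤ ∫ x in Metric.closedBall (0:E3) r, r ^ 2 / L₀ * Tf f x := by
      refine setIntegral_mono_ae_restrict (rho_int hint).integrableOn
        ((hTi.const_mul _).integrableOn) ?_
      have hmem : ∀ᵐ x ∂(volume.restrict (Metric.closedBall (0:E3) r)),
          x ∈ Metric.closedBall (0:E3) r := ae_restrict_mem measurableSet_closedBall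
      have hk := ae_restrict_of_ae (μ := volume) (s := Metric.closedBall (0:E3) r)
        (rho_le_kin hL₀ hpos hint hkin hsupp)
      filter_upwards [hmem, hk] with x hxr hxk
      refine hxk.trans ?_
      have hxn : ‖x‖ ≤ r := by
        simpa [Metric.mem_closedBall, dist_zero_right] using hxr
      have h1 : ‖x‖ ^ 2 / L₀ ≤ r ^ 2 / L₀ := by
        gcongr
      exact mul_le_mul_of_nonneg_right h1 (Tf_nonneg hpos x)
    have step2 : ∫ x in Metric.closedBall (0:E3) r, r ^ 2 / L₀ * Tf f x
        ≤ r ^ 2 / L₀ * Ttot f := by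
      rw [integral_const_mul]
      refine mul_le_mul_of_nonneg_left ?_ (by positivity)
      exact setIntegral_le_integral hTi (Filter.Eventually.of_forall (Tf_nonneg hpos))
    exact step1.trans step2

end kinbound

section bounds

/-- integrability of `min C (D/‖x‖⁴)` on `E3`. -/
lemma bound_int (C D : ℝ) (hC : 0 ≤ C) (hD : 0 ≤ D) :
    Integrable (fun x : E3 => min C (D / ‖x‖ ^ 4)) := by
  have hfr : ((Module.finrank ℝ E3 : ℝ)) < (4:ℝ) := by
    simp [finrank_euclideanSpace]; norm_num
  have hbase : Integrable (fun x : E3 => (1 + ‖x‖) ^ (-(4:ℝ))) :=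
    integrable_one_add_norm hfr
  refine (hbase.const_mul (16 * max C D)).mono' ?_ ?_
  · refine (measurable_const.min ?_).aestronglyMeasurable
    exact measurable_const.div ((measurable_norm).pow measurable_const)
  · refine Filter.Eventually.of_forall (fun x => ?_)
    set t := ‖x‖ with ht
    have ht0 : 0 ≤ t := norm_nonneg x
    have h1t : (0:ℝ) < 1 + t := by linarith
    have hrpow : (1 + t) ^ (-(4:ℝ)) = ((1 + t) ^ (4:ℕ))⁻¹ := by
      rw [Real.rpow_neg h1t.le, ← Real.rpow_natCast (1+t) 4]
      norm_num
    have hmin_nonneg : 0 ≤ min C (D / t ^ 4) := le_min hC (by positivity)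
    have hmax : (0:ℝ) ≤ max C D := le_max_of_le_left hC
    rw [Real.norm_of_nonneg hmin_nonneg, hrpow, le_mul_inv_iff₀ (by positivity)]
    rcases le_total t 1 with h | h
    · have h16 : (1 + t) ^ (4:ℕ) ≤ 16 := by
        calc (1 + t) ^ (4:ℕ) ≤ 2 ^ (4:ℕ) := pow_le_pow_left₀ h1t.le (by linarith) 4
          _ = 16 := by norm_num
      calc min C (D / t ^ 4) * (1+t)^(4:ℕ)
          ≤ max C D * 16 :=
            mul_le_mul (le_trans (min_le_left _ _) (le_max_left _ _)) h16 (by positivity) hmax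
        _ = 16 * max C D := by ring
    · have ht1 : (0:ℝ) < t := lt_of_lt_of_le one_pos h
      have h2t : (1 + t) ^ (4:ℕ) ≤ 16 * t ^ 4 := by
        calc (1 + t) ^ (4:ℕ) ≤ (2*t) ^ (4:ℕ) := pow_le_pow_left₀ h1t.le (by linarith) 4
          _ = 16 * t ^ 4 := by ring
      calc min C (D / t ^ 4) * (1+t)^(4:ℕ)
          ≤ (D / t ^ 4) * (16 * t ^ 4) :=
            mul_le_mul (min_le_right _ _) h2t (by positivity) (by positivity)
        _ = 16 * D := by field_simp
        _ ≤ 16 * max C D := by nlinarith [le_max_right C D]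

/-- integrability of `min C (D/s²)` on `(0,∞) ⊂ ℝ`. -/
lemma bound_int_line (C D : ℝ) (hC : 0 ≤ C) (hD : 0 ≤ D) :
    IntegrableOn (fun s : ℝ => min C (D / s ^ 2)) (Set.Ioi 0) := by
  have hm : Measurable (fun s : ℝ => min C (D / s ^ 2)) :=
    measurable_const.min (measurable_const.div ((measurable_id.pow measurable_const)))
  have hnn : ∀ s : ℝ, 0 ≤ min C (D / s ^ 2) := fun s => le_min hC (by positivity)
  have hsplit : Set.Ioc (0:ℝ) 1 ∪ Set.Ioi (1:ℝ) = Set.Ioi 0 :=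
    Set.Ioc_union_Ioi_eq_Ioi zero_le_one
  rw [← hsplit]
  refine IntegrableOn.union ?_ ?_
  · refine Integrable.mono' (integrable_const C) hm.aestronglyMeasurable.restrict ?_
    refine Filter.Eventually.of_forall (fun s => ?_)
    rw [Real.norm_of_nonneg (hnn s)]
    exact min_le_left _ _
  · have hpow : IntegrableOn (fun s : ℝ => D * s ^ (-(2:ℝ))) (Set.Ioi 1) :=
      (integrableOn_Ioi_rpow_of_lt (by norm_num) one_pos).const_mul D
    refine Integrable.mono' hpow hm.aestronglyMeasurable.restrict ?_
    have hmem : ∀ᵐ s ∂(volume.restrict (Set.Ioi (1:ℝ))), s ∈ Set.Ioi (1:ℝ) :=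
      ae_restrict_mem measurableSet_Ioi
    filter_upwards [hmem] with s hs
    have hs1 : (1:ℝ) < s := hs
    have hs0 : (0:ℝ) < s := lt_trans one_pos hs1
    rw [Real.norm_of_nonneg (hnn s)]
    have : s ^ (-(2:ℝ)) = (s ^ (2:ℕ))⁻¹ := by
      rw [Real.rpow_neg hs0.le, ← Real.rpow_natCast s 2]
      norm_num
    rw [this]
    refine le_trans (min_le_right _ _) ?_
    rw [div_eq_mul_inv]

end bounds

section potential

variable (hL₀ : 0 < L₀) (hM : 0 ≤ M)
    (hmeas : Measurable (Function.uncurry f))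
    (hpos : ∀ x v, 0 ≤ f x v)
    (hint : Integrable (Function.uncurry f))
    (hmass : (∫ x, ∫ v, f x v) = M)
    (hkin : Integrable (fun z : E3 × E3 => ‖z.2‖ ^ 2 * f z.1 z.2))
    (hsupp : ∀ᵐ z : E3 × E3, Lfun z.1 z.2 < L₀ → f z.1 z.2 = 0)

include hpos in
lemma mdiv_nonneg (s : ℝ) : 0 ≤ mF f s / s ^ 2 :=
  div_nonneg (mF_nonneg hpos s) (by positivity)

include hL₀ hM hmeas hpos hint hmass hkin hsupp in
lemma mdiv_le {s : ℝ} (hs : 0 < s) :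
    mF f s / s ^ 2 ≤ min (Ttot f / L₀) (M / s ^ 2) := by
  refine le_min ?_ ?_
  · rw [div_le_iff₀ (by positivity)]
    calc mF f s ≤ s ^ 2 / L₀ * Ttot f := mF_le_quad hL₀ hpos hint hkin hsupp hmeas s
      _ = Ttot f / L₀ * s ^ 2 := by ring
  · gcongr
    exact mF_le hpos hint hmass s

include hL₀ hM hmeas hpos hint hmass hkin hsupp in
lemma mdiv_int : Integrable (fun s : ℝ => mF f s / s ^ 2) := by
  have heq : (fun s : ℝ => mF f s / s ^ 2)
      = Set.indicator (Set.Ioi 0) (fun s : ℝ => mF f s / s ^ 2) := by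
    funext s
    rcases lt_or_ge 0 s with hs | hs
    · rw [Set.indicator_of_mem (Set.mem_Ioi.2 hs)]
    · rw [Set.indicator_of_notMem (by simpa using hs), mF_nonpos hs, zero_div]
  rw [heq, integrable_indicator_iff measurableSet_Ioi]
  have hTt : 0 ≤ Ttot f / L₀ := div_nonneg (Ttot_nonneg hpos hkin) hL₀.le
  refine Integrable.mono' (bound_int_line (Ttot f / L₀) M hTt hM)
    (((mF_meas hpos hint).div (measurable_id.pow measurable_const)).aestronglyMeasurable.restrict) ?_
  filter_upwards [ae_restrict_mem measurableSet_Ioi] with s hs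
  rw [Real.norm_of_nonneg (mdiv_nonneg hpos s)]
  exact mdiv_le hL₀ hM hmeas hpos hint hmass hkin hsupp hs

/-- The uniform bound for the potential. -/
def Kf (f : E3 → E3 → ℝ) : ℝ := ∫ s in Set.Ioi (0:ℝ), mF f s / s ^ 2

include hL₀ hM hmeas hpos hint hmass hkin hsupp in
lemma UF_abs_le (x : E3) : |UF f x| ≤ Kf f := by
  have hit := (mdiv_int hL₀ hM hmeas hpos hint hmass hkin hsupp).integrableOn
    (s := Set.Ioi ‖x‖)
  have h0 : 0 ≤ ∫ s in Set.Ioi ‖x‖, mF f s / s ^ 2 :=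
    setIntegral_nonneg measurableSet_Ioi (fun s _ => mdiv_nonneg hpos s)
  rw [UF, abs_neg, abs_of_nonneg h0]
  refine setIntegral_mono_set
    ((mdiv_int hL₀ hM hmeas hpos hint hmass hkin hsupp).integrableOn) ?_ ?_
  · exact Filter.Eventually.of_forall (mdiv_nonneg hpos)
  · exact HasSubset.Subset.eventuallyLE (Set.Ioi_subset_Ioi (norm_nonneg x))

include hL₀ hM hmeas hpos hint hmass hkin hsupp in
lemma UF_meas : Measurable (UF f) := by
  have hanti : Antitone (fun r : ℝ => ∫ s in Set.Ioi r, mF f s / s ^ 2) := by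
    intro r r' hr
    refine setIntegral_mono_set
      ((mdiv_int hL₀ hM hmeas hpos hint hmass hkin hsupp).integrableOn) ?_ ?_
    · exact Filter.Eventually.of_forall (mdiv_nonneg hpos)
    · exact HasSubset.Subset.eventuallyLE (Set.Ioi_subset_Ioi hr)
  exact (hanti.measurable.comp measurable_norm).neg

include hpos hint in
lemma gradU_meas : Measurable (gradUF f) :=
  (((mF_meas hpos hint).comp measurable_norm).div
    (measurable_norm.pow measurable_const)).smul measurable_id

lemma inner_gradU (g h : E3 → E3 → ℝ) (x : E3) :
    (inner ℝ (gradUF g x) (gradUF h x) : ℝ) = mF g ‖x‖ * mF h ‖x‖ / ‖x‖ ^ 4 := by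
  rcases eq_or_ne x 0 with rfl | hx
  · simp [gradUF]
  · have hxn : ‖x‖ ≠ 0 := norm_ne_zero_iff.2 hx
    rw [gradUF, gradUF, real_inner_smul_left, real_inner_smul_right,
      real_inner_self_eq_norm_sq]
    field_simp

lemma norm_gradU_sq (g : E3 → E3 → ℝ) (x : E3) :
    ‖gradUF g x‖ ^ 2 = mF g ‖x‖ * mF g ‖x‖ / ‖x‖ ^ 4 := by
  rw [← real_inner_self_eq_norm_sq]
  exact inner_gradU g g x

end potential

/-- Bundle of regularity assumptions extracted from `FM`. -/
structure Nice (L₀ M : ℝ) (f : E3 → E3 → ℝ) : Prop where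
  meas : Measurable (Function.uncurry f)
  pos : ∀ x v, 0 ≤ f x v
  int : Integrable (Function.uncurry f)
  mass : (∫ x, ∫ v, f x v) = M
  kin : Integrable (fun z : E3 × E3 => ‖z.2‖ ^ 2 * f z.1 z.2)
  supp : ∀ᵐ z : E3 × E3, Lfun z.1 z.2 < L₀ → f z.1 z.2 = 0

section twofun

variable (hL₀ : 0 < L₀) (hM : 0 ≤ M) (hg : Nice L₀ M g) (hh : Nice L₀ M h)

include hL₀ hM hg hh in
lemma mm_le (x : E3) : mF g ‖x‖ * mF h ‖x‖ / ‖x‖ ^ 4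
    ≤ min (Ttot g * Ttot h / (L₀ * L₀)) (M * M / ‖x‖ ^ 4) := by
  have hTg := Ttot_nonneg hg.pos hg.kin
  have hTh := Ttot_nonneg hh.pos hh.kin
  rcases eq_or_ne x 0 with rfl | hx
  · have : mF g ‖(0:E3)‖ = 0 := by
      rw [norm_zero]; exact mF_nonpos le_rfl
    rw [this, zero_mul, zero_div]
    refine le_min (by positivity) (by positivity)
  · have hr : 0 < ‖x‖ := norm_pos_iff.2 hx
    have h1 := mF_le_quad hL₀ hg.pos hg.int hg.kin hg.supp hg.meas ‖x‖
    have h2 := mF_le_quad hL₀ hh.pos hh.int hh.kin hh.supp hh.meas ‖x‖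
    have hg0 := mF_nonneg hg.pos ‖x‖
    have hh0 := mF_nonneg hh.pos ‖x‖
    refine le_min ?_ ?_
    · rw [div_le_div_iff₀ (by positivity) (by positivity)]
      have key : mF g ‖x‖ * mF h ‖x‖ ≤ (‖x‖ ^ 2 / L₀ * Ttot g) * (‖x‖ ^ 2 / L₀ * Ttot h) :=
        mul_le_mul h1 h2 hh0 (by positivity)
      calc mF g ‖x‖ * mF h ‖x‖ * (L₀ * L₀)
          ≤ (‖x‖ ^ 2 / L₀ * Ttot g) * (‖x‖ ^ 2 / L₀ * Ttot h) * (L₀ * L₀) := by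
            exact mul_le_mul_of_nonneg_right key (by positivity)
        _ = Ttot g * Ttot h * ‖x‖ ^ 4 := by field_simp
    · gcongr
      · exact mF_le hg.pos hg.int hg.mass ‖x‖
      · exact mF_le hh.pos hh.int hh.mass ‖x‖

include hL₀ hM hg hh in
lemma mm_int : Integrable (fun x : E3 => mF g ‖x‖ * mF h ‖x‖ / ‖x‖ ^ 4) := by
  have hTg := Ttot_nonneg hg.pos hg.kin
  have hTh := Ttot_nonneg hh.pos hh.kin
  refine Integrable.mono'
    (bound_int (Ttot g * Ttot h / (L₀ * L₀)) (M * M) (by positivity) (by positivity)) ?_ ?_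
  · exact ((((mF_meas hg.pos hg.int).comp measurable_norm).mul
      ((mF_meas hh.pos hh.int).comp measurable_norm)).div
      (measurable_norm.pow measurable_const)).aestronglyMeasurable
  · refine Filter.Eventually.of_forall (fun x => ?_)
    have hnn : 0 ≤ mF g ‖x‖ * mF h ‖x‖ / ‖x‖ ^ 4 := by
      have := mF_nonneg hg.pos ‖x‖
      have := mF_nonneg hh.pos ‖x‖
      positivity
    rw [Real.norm_of_nonneg hnn]
    exact mm_le hL₀ hM hg hh x

include hL₀ hM hg hh in
lemma inner_int : Integrable (fun x : E3 => (inner ℝ (gradUF g x) (gradUF h x) : ℝ)) := by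
  have : (fun x : E3 => (inner ℝ (gradUF g x) (gradUF h x) : ℝ))
      = fun x => mF g ‖x‖ * mF h ‖x‖ / ‖x‖ ^ 4 := funext (inner_gradU g h)
  rw [this]
  exact mm_int hL₀ hM hg hh

include hL₀ hM hg in
lemma normsq_int : Integrable (fun x : E3 => ‖gradUF g x‖ ^ 2) := by
  have : (fun x : E3 => ‖gradUF g x‖ ^ 2)
      = fun x => mF g ‖x‖ * mF g ‖x‖ / ‖x‖ ^ 4 := funext (norm_gradU_sq g)
  rw [this]
  exact mm_int hL₀ hM hg hg

/-- polar coordinates on `E3` -/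
lemma polar (F : ℝ → ℝ) : ∫ x : E3, F ‖x‖ =
    (4 * π) * ∫ y in Set.Ioi (0:ℝ), y ^ 2 * F y := by
  rw [MeasureTheory.integral_fun_norm_addHaar (volume : Measure E3) F]
  have h3 : Module.finrank ℝ E3 = 3 := by simp [finrank_euclideanSpace]
  rw [h3]
  have hb : (volume (Metric.ball (0:E3) 1)).toReal = 4 * π / 3 := by
    rw [EuclideanSpace.volume_ball]
    have h52 : Real.Gamma ((3:ℝ)/2 + 1) = 3/4 * Real.sqrt π := by
      rw [Real.Gamma_add_one (by norm_num)]
      have : (3:ℝ)/2 = 1/2 + 1 := by norm_num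
      rw [this, Real.Gamma_add_one (by norm_num), Real.Gamma_one_half_eq]
      ring
    simp only [Fintype.card_fin]
    rw [show ((3:ℕ):ℝ)/2 + 1 = (3:ℝ)/2 + 1 by norm_num, h52]
    rw [ENNReal.ofReal_one, one_pow, one_mul, ENNReal.toReal_ofReal (by positivity)]
    have : Real.sqrt π ^ 3 = π * Real.sqrt π := by rw [pow_succ, Real.sq_sqrt pi_pos.le]
    rw [this, div_eq_iff (by positivity)]
    ring
  rw [measureReal_def, hb, nsmul_eq_mul, smul_eq_mul]
  rw [show ((3:ℕ):ℝ) * (4 * π / 3 * ∫ (y : ℝ) in Set.Ioi 0, y ^ (3 - 1) • F y)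
      = (4*π) * ∫ (y : ℝ) in Set.Ioi 0, y ^ 2 • F y by push_cast; ring]
  simp [smul_eq_mul]

include hL₀ hM hg hh in
lemma inner_eq : ∫ x : E3, (inner ℝ (gradUF g x) (gradUF h x) : ℝ)
    = (4 * π) * ∫ s in Set.Ioi (0:ℝ), mF g s * mF h s / s ^ 2 := by
  have h1 : (fun x : E3 => (inner ℝ (gradUF g x) (gradUF h x) : ℝ))
      = fun x => mF g ‖x‖ * mF h ‖x‖ / ‖x‖ ^ 4 := funext (inner_gradU g h)
  rw [h1, polar (fun r => mF g r * mF h r / r ^ 4)]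
  congr 1
  refine setIntegral_congr_fun measurableSet_Ioi (fun y hy => ?_)
  have hy0 : (0:ℝ) < y := hy
  field_simp

end twofun

section fubini

variable (hL₀ : 0 < L₀) (hM : 0 ≤ M) (hg : Nice L₀ M g) (hh : Nice L₀ M h)

lemma ball_ae_eq (s : ℝ) :
    (Metric.ball (0:E3) s : Set E3) =ᵐ[volume] Metric.closedBall (0:E3) s := by
  refine MeasureTheory.ae_eq_set.2 ⟨?_, ?_⟩
  · have hempty : (Metric.ball (0:E3) s \ Metric.closedBall (0:E3) s) = ∅ :=
      Set.diff_eq_empty.2 Metric.ball_subset_closedBall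
    rw [hempty]
    exact measure_empty
  · rw [Metric.closedBall_diff_ball]
    exact Measure.addHaar_sphere (μ := (volume : Measure E3)) 0 s

include hL₀ hM hg hh in
lemma Urho_eq : ∫ x, UF g x * rhoF h x
    = -∫ s in Set.Ioi (0:ℝ), mF g s * mF h s / s ^ 2 := by
  classical
  set φ : ℝ → ℝ := fun s => mF g s / s ^ 2 with hφdef
  have hφ_meas : Measurable φ := (mF_meas hg.pos hg.int).div (measurable_id.pow measurable_const)
  have hφ_nonneg : ∀ s, 0 ≤ φ s := mdiv_nonneg hg.pos
  set F : E3 → ℝ → ℝ := fun x s => Set.indicator (Set.Ioi ‖x‖) φ s * rhoF h x with hFdef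
  have hρ_meas : StronglyMeasurable (rhoF h) := rho_meas hh.meas
  have hρ_nonneg := rho_nonneg hh.pos
  have hS : MeasurableSet {p : E3 × ℝ | ‖p.1‖ < p.2} :=
    measurableSet_lt (measurable_fst.norm) measurable_snd
  have hFuncEq : Function.uncurry F
      = Set.indicator {p : E3 × ℝ | ‖p.1‖ < p.2} (fun p => φ p.2 * rhoF h p.1) := by
    funext p
    simp only [Function.uncurry, Set.indicator_apply, Set.mem_Ioi, Set.mem_setOf_eq]
    by_cases hp : ‖p.1‖ < p.2
    · simp [hFdef, Set.indicator_apply, hp]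
    · simp [hFdef, Set.indicator_apply, hp]
  set Bnd : ℝ → ℝ := Set.indicator (Set.Ioi 0) (fun s => min (Ttot g / L₀) (M / s ^ 2))
    with hBnd
  have hTg0 : 0 ≤ Ttot g / L₀ := div_nonneg (Ttot_nonneg hg.pos hg.kin) hL₀.le
  have hBnd_int : Integrable Bnd := by
    rw [hBnd, integrable_indicator_iff measurableSet_Ioi]
    exact bound_int_line (Ttot g / L₀) M hTg0 hM
  have hF_int : Integrable (Function.uncurry F) ((volume : Measure E3).prod volume) := by
    refine Integrable.mono' ((rho_int hh.int).mul_prod hBnd_int) ?_ ?_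
    · rw [hFuncEq]
      exact (((hφ_meas.comp measurable_snd).mul
        (hρ_meas.measurable.comp measurable_fst)).indicator hS).aestronglyMeasurable
    · refine Filter.Eventually.of_forall (fun p => ?_)
      have hnn : 0 ≤ Function.uncurry F p := by
        refine mul_nonneg ?_ (hρ_nonneg p.1)
        exact Set.indicator_nonneg (fun s _ => hφ_nonneg s) p.2
      rw [Real.norm_of_nonneg hnn]
      show Set.indicator (Set.Ioi ‖p.1‖) φ p.2 * rhoF h p.1 ≤ rhoF h p.1 * Bnd p.2
      rw [mul_comm (rhoF h p.1) (Bnd p.2)]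
      refine mul_le_mul_of_nonneg_right ?_ (hρ_nonneg p.1)
      by_cases hp : p.2 ∈ Set.Ioi ‖p.1‖
      · rw [Set.indicator_of_mem hp]
        have hp0 : (0:ℝ) < p.2 := lt_of_le_of_lt (norm_nonneg _) hp
        rw [hBnd, Set.indicator_of_mem (Set.mem_Ioi.2 hp0)]
        exact mdiv_le hL₀ hM hg.meas hg.pos hg.int hg.mass hg.kin hg.supp hp0
      · rw [Set.indicator_of_notMem hp]
        exact Set.indicator_nonneg (fun s hs => le_min hTg0 (by positivity)) p.2
  have step1 : ∀ x, UF g x * rhoF h x = -∫ s, F x s := by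
    intro x
    have : ∫ s, F x s = (∫ s in Set.Ioi ‖x‖, φ s) * rhoF h x := by
      rw [← integral_indicator measurableSet_Ioi, ← integral_mul_const]
    rw [this, UF]
    ring
  calc ∫ x, UF g x * rhoF h x = ∫ x, -∫ s, F x s := by
        exact integral_congr_ae (Filter.Eventually.of_forall step1)
    _ = -∫ x, ∫ s, F x s := integral_neg _
    _ = -∫ s, ∫ x, F x s := by rw [integral_integral_swap hF_int]
    _ = -∫ s in Set.Ioi (0:ℝ), mF g s * mF h s / s ^ 2 := ?_
  congr 1
  have step2 : ∀ s : ℝ, ∫ x, F x s = Set.indicator (Set.Ioi (0:ℝ))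
      (fun s => mF g s * mF h s / s ^ 2) s := by
    intro s
    rcases le_or_gt s 0 with hs | hs
    · have hzero : ∀ x : E3, F x s = 0 := by
        intro x
        show Set.indicator (Set.Ioi ‖x‖) φ s * rhoF h x = 0
        rw [Set.indicator_of_notMem (by simp; exact le_trans hs (norm_nonneg x)), zero_mul]
      rw [Set.indicator_of_notMem (by simpa using hs)]
      simp [hzero]
    · rw [Set.indicator_of_mem (Set.mem_Ioi.2 hs)]
      have heq : (fun x => F x s)
          = Set.indicator (Metric.ball (0:E3) s) (fun x => φ s * rhoF h x) := by
        funext x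
        by_cases hx : x ∈ Metric.ball (0:E3) s
        · rw [Set.indicator_of_mem hx]
          show Set.indicator (Set.Ioi ‖x‖) φ s * rhoF h x = _
          rw [Set.indicator_of_mem (Set.mem_Ioi.2 (mem_ball_zero_iff.1 hx))]
        · rw [Set.indicator_of_notMem hx]
          show Set.indicator (Set.Ioi ‖x‖) φ s * rhoF h x = 0
          have : ¬ (‖x‖ < s) := fun hc => hx (mem_ball_zero_iff.2 hc)
          rw [Set.indicator_of_notMem (by simpa using this), zero_mul]
      rw [heq, integral_indicator measurableSet_ball,
        setIntegral_congr_set (ball_ae_eq s), integral_const_mul]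
      show φ s * mF h s = _
      rw [hφdef]
      ring
  rw [integral_congr_ae (Filter.Eventually.of_forall step2),
    integral_indicator measurableSet_Ioi]

end fubini

section prodint

variable (hL₀ : 0 < L₀) (hM : 0 ≤ M) (hg : Nice L₀ M g) (hh : Nice L₀ M h)

include hL₀ hM hg hh in
lemma Urho_int : Integrable (fun x => UF g x * rhoF h x) := by
  refine Integrable.mono' ((rho_int hh.int).const_mul (Kf g)) ?_ ?_
  · exact ((UF_meas hL₀ hM hg.meas hg.pos hg.int hg.mass hg.kin hg.supp).mul
      (rho_meas hh.meas).measurable).aestronglyMeasurable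
  · refine Filter.Eventually.of_forall (fun x => ?_)
    rw [norm_mul, Real.norm_eq_abs, Real.norm_of_nonneg (rho_nonneg hh.pos x)]
    exact mul_le_mul_of_nonneg_right
      (UF_abs_le hL₀ hM hg.meas hg.pos hg.int hg.mass hg.kin hg.supp x) (rho_nonneg hh.pos x)

include hL₀ hM hg hh in
lemma central_rho_int (M_c : ℝ) (hMc : 0 ≤ M_c) :
    Integrable (fun x => (M_c / ‖x‖) * rhoF h x) := by
  have hTi := Tf_int hh.kin
  have hbound : Integrable (fun x => M_c * (rhoF h x + Tf h x / L₀)) :=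
    (((rho_int hh.int).add (hTi.div_const L₀)).const_mul M_c)
  refine Integrable.mono' hbound ?_ ?_
  · exact ((measurable_const.div measurable_norm).mul
      (rho_meas hh.meas).measurable).aestronglyMeasurable
  · filter_upwards [rho_le_kin hL₀ hh.pos hh.int hh.kin hh.supp] with x hx
    have hρ0 := rho_nonneg hh.pos x
    have hT0 := Tf_nonneg hh.pos x
    have hnn : 0 ≤ (M_c / ‖x‖) * rhoF h x := by positivity
    rw [Real.norm_of_nonneg hnn]
    rcases eq_or_ne x 0 with rfl | hx0
    · rw [norm_zero, div_zero, zero_mul]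
      positivity
    · have hxn : 0 < ‖x‖ := norm_pos_iff.2 hx0
      rcases le_total ‖x‖ 1 with hx1 | hx1
      · have : (M_c / ‖x‖) * rhoF h x ≤ (M_c / ‖x‖) * (‖x‖ ^ 2 / L₀ * Tf h x) :=
          mul_le_mul_of_nonneg_left hx (by positivity)
        refine this.trans ?_
        have heq : (M_c / ‖x‖) * (‖x‖ ^ 2 / L₀ * Tf h x) = M_c * ‖x‖ * (Tf h x / L₀) := by
          field_simp
        rw [heq]
        have h1 : M_c * ‖x‖ * (Tf h x / L₀) ≤ M_c * 1 * (Tf h x / L₀) := by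
          refine mul_le_mul_of_nonneg_right ?_ (by positivity)
          exact mul_le_mul_of_nonneg_left hx1 hMc
        refine h1.trans ?_
        nlinarith [mul_nonneg hMc hρ0]
      · have h1 : M_c / ‖x‖ ≤ M_c := by
          rw [div_le_iff₀ hxn]
          nlinarith
        have : (M_c / ‖x‖) * rhoF h x ≤ M_c * rhoF h x :=
          mul_le_mul_of_nonneg_right h1 hρ0
        refine this.trans ?_
        nlinarith [mul_nonneg hMc (div_nonneg hT0 hL₀.le)]

include hL₀ hh in
lemma central_prod_int (M_c : ℝ) (hMc : 0 ≤ M_c) :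
    Integrable (fun z : E3 × E3 => (M_c / ‖z.1‖) * h z.1 z.2)
      ((volume : Measure E3).prod volume) := by
  have hbound : Integrable (fun z : E3 × E3 =>
      (M_c / Real.sqrt L₀) * ((1 + ‖z.2‖ ^ 2) * h z.1 z.2))
      ((volume : Measure E3).prod volume) := by
    have h1 : Integrable (fun z : E3 × E3 => h z.1 z.2)
        ((volume : Measure E3).prod volume) := by
      have := hh.int
      rw [vol_prod] at this
      exact this
    have h2 : Integrable (fun z : E3 × E3 => ‖z.2‖ ^ 2 * h z.1 z.2)
        ((volume : Measure E3).prod volume) := by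
      have := hh.kin
      rw [vol_prod] at this
      exact this
    have h3 : (fun z : E3 × E3 => (1 + ‖z.2‖ ^ 2) * h z.1 z.2)
        = fun z => h z.1 z.2 + ‖z.2‖ ^ 2 * h z.1 z.2 := by
      funext z
      ring
    refine Integrable.const_mul ?_ _
    rw [h3]
    exact h1.add h2
  refine Integrable.mono' hbound ?_ ?_
  · exact ((measurable_const.div (measurable_fst.norm)).mul hh.meas).aestronglyMeasurable
  · have hsupp := hh.supp
    rw [vol_prod] at hsupp
    filter_upwards [hsupp] with z hz
    have hp := hh.pos z.1 z.2
    have hnn : 0 ≤ (M_c / ‖z.1‖) * h z.1 z.2 := by positivity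
    rw [Real.norm_of_nonneg hnn]
    by_cases hf0 : h z.1 z.2 = 0
    · rw [hf0, mul_zero, mul_zero]
      simp
    · have hL : L₀ ≤ Lfun z.1 z.2 := by
        by_contra hc
        push_neg at hc
        exact hf0 (hz hc)
      have hL2 : L₀ ≤ (‖z.1‖ * ‖z.2‖) ^ 2 := by
        have := sq_nonneg (inner ℝ z.1 z.2 : ℝ)
        unfold Lfun at hL
        nlinarith
      have hsq : Real.sqrt L₀ ≤ ‖z.1‖ * ‖z.2‖ := by
        have h1 := Real.sqrt_le_sqrt hL2
        rwa [Real.sqrt_sq (by positivity)] at h1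
      have hx0 : 0 < ‖z.1‖ := by
        rcases lt_or_eq_of_le (norm_nonneg z.1) with h' | h'
        · exact h'
        · exfalso
          have := Real.sqrt_pos.2 hL₀
          nlinarith [norm_nonneg z.2]
      have hv0 : 0 ≤ ‖z.2‖ := norm_nonneg _
      have hsL : 0 < Real.sqrt L₀ := Real.sqrt_pos.2 hL₀
      rw [div_mul_eq_mul_div, div_le_iff₀ hx0, div_mul_eq_mul_div,
        div_mul_eq_mul_div, le_div_iff₀ hsL]
      have key : ‖z.2‖ ≤ 1 + ‖z.2‖ ^ 2 := by nlinarith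
      calc M_c * h z.1 z.2 * Real.sqrt L₀
          ≤ M_c * h z.1 z.2 * (‖z.1‖ * ‖z.2‖) :=
            mul_le_mul_of_nonneg_left hsq (by positivity)
        _ ≤ M_c * ((1 + ‖z.2‖ ^ 2) * h z.1 z.2) * ‖z.1‖ := by
            nlinarith [mul_nonneg (mul_nonneg hMc hp) hx0.le]

include hL₀ hM hg hh in
lemma U_prod_int : Integrable (fun z : E3 × E3 => UF g z.1 * h z.1 z.2)
    ((volume : Measure E3).prod volume) := by
  have h1 : Integrable (fun z : E3 × E3 => Kf g * h z.1 z.2)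
      ((volume : Measure E3).prod volume) := by
    have := hh.int
    rw [vol_prod] at this
    exact this.const_mul _
  refine Integrable.mono' h1 ?_ ?_
  · exact (((UF_meas hL₀ hM hg.meas hg.pos hg.int hg.mass hg.kin hg.supp).comp
      measurable_fst).mul hh.meas).aestronglyMeasurable
  · refine Filter.Eventually.of_forall (fun z => ?_)
    rw [norm_mul, Real.norm_eq_abs, Real.norm_of_nonneg (hh.pos z.1 z.2)]
    exact mul_le_mul_of_nonneg_right
      (UF_abs_le hL₀ hM hg.meas hg.pos hg.int hg.mass hg.kin hg.supp z.1) (hh.pos z.1 z.2)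

end prodint

section assembly

variable {f f₀ : E3 → E3 → ℝ} (hL₀ : 0 < L₀) (hM : 0 ≤ M) (hMc : 0 ≤ M_c)
  (hNf : Nice L₀ M f) (hN₀ : Nice L₀ M f₀)

include hL₀ hM hMc hNf hN₀ in
lemma dfun_eq (E₀ : ℝ)
    (hcasf : Integrable (fun z : E3 × E3 =>
      f z.1 z.2 ^ (1 + 1 / k) * (max (Lfun z.1 z.2 - L₀) 0) ^ (-(l / k))))
    (hcas₀ : Integrable (fun z : E3 × E3 =>
      f₀ z.1 z.2 ^ (1 + 1 / k) * (max (Lfun z.1 z.2 - L₀) 0) ^ (-(l / k)))) :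
    dfun k l L₀ M_c E₀ f f₀ =
      (Cas k l L₀ f - Cas k l L₀ f₀) + (Ekin f - Ekin f₀)
      + ((∫ x, UF f₀ x * rhoF f x) - ∫ x, UF f₀ x * rhoF f₀ x)
      - ((∫ x, (M_c / ‖x‖) * rhoF f x) - ∫ x, (M_c / ‖x‖) * rhoF f₀ x) := by
  set P := (volume : Measure E3).prod (volume : Measure E3) with hP
  have iA1 : Integrable (fun z : E3 × E3 =>
      f z.1 z.2 ^ (1 + 1 / k) * (max (Lfun z.1 z.2 - L₀) 0) ^ (-(l / k))) P := by
    rw [hP, ← vol_prod]; exact hcasf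
  have iA2 : Integrable (fun z : E3 × E3 =>
      f₀ z.1 z.2 ^ (1 + 1 / k) * (max (Lfun z.1 z.2 - L₀) 0) ^ (-(l / k))) P := by
    rw [hP, ← vol_prod]; exact hcas₀
  have iK1 : Integrable (fun z : E3 × E3 => ‖z.2‖ ^ 2 * f z.1 z.2) P := by
    rw [hP, ← vol_prod]; exact hNf.kin
  have iK2 : Integrable (fun z : E3 × E3 => ‖z.2‖ ^ 2 * f₀ z.1 z.2) P := by
    rw [hP, ← vol_prod]; exact hN₀.kin
  have iU1 : Integrable (fun z : E3 × E3 => UF f₀ z.1 * f z.1 z.2) P :=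
    U_prod_int hL₀ hM hN₀ hNf
  have iU2 : Integrable (fun z : E3 × E3 => UF f₀ z.1 * f₀ z.1 z.2) P :=
    U_prod_int hL₀ hM hN₀ hN₀
  have iC1 : Integrable (fun z : E3 × E3 => (M_c / ‖z.1‖) * f z.1 z.2) P :=
    central_prod_int hL₀ hNf M_c hMc
  have iC2 : Integrable (fun z : E3 × E3 => (M_c / ‖z.1‖) * f₀ z.1 z.2) P :=
    central_prod_int hL₀ hN₀ M_c hMc
  have iF1 : Integrable (fun z : E3 × E3 => f z.1 z.2) P := by
    rw [hP, ← vol_prod]; exact hNf.int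
  have iF2 : Integrable (fun z : E3 × E3 => f₀ z.1 z.2) P := by
    rw [hP, ← vol_prod]; exact hN₀.int
  have iB : Integrable (fun z : E3 × E3 =>
      2⁻¹ * (‖z.2‖ ^ 2 * f z.1 z.2) - 2⁻¹ * (‖z.2‖ ^ 2 * f₀ z.1 z.2)
      + (UF f₀ z.1 * f z.1 z.2 - UF f₀ z.1 * f₀ z.1 z.2)
      - ((M_c / ‖z.1‖) * f z.1 z.2 - (M_c / ‖z.1‖) * f₀ z.1 z.2)
      - E₀ * (f z.1 z.2 - f₀ z.1 z.2)) P :=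
    (((((iK1.const_mul 2⁻¹).sub (iK2.const_mul 2⁻¹)).add (iU1.sub iU2)).sub
      (iC1.sub iC2)).sub ((iF1.sub iF2).const_mul E₀))
  have heq : (Function.uncurry fun x v =>
      ((f x v ^ (1 + 1 / k) - f₀ x v ^ (1 + 1 / k)) * (max (Lfun x v - L₀) 0) ^ (-(l / k))
        + (Emic M_c f₀ x v - E₀) * (f x v - f₀ x v)))
      = fun z : E3 × E3 =>
      (f z.1 z.2 ^ (1 + 1 / k) * (max (Lfun z.1 z.2 - L₀) 0) ^ (-(l / k))
        - f₀ z.1 z.2 ^ (1 + 1 / k) * (max (Lfun z.1 z.2 - L₀) 0) ^ (-(l / k)))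
      + (2⁻¹ * (‖z.2‖ ^ 2 * f z.1 z.2) - 2⁻¹ * (‖z.2‖ ^ 2 * f₀ z.1 z.2)
        + (UF f₀ z.1 * f z.1 z.2 - UF f₀ z.1 * f₀ z.1 z.2)
        - ((M_c / ‖z.1‖) * f z.1 z.2 - (M_c / ‖z.1‖) * f₀ z.1 z.2)
        - E₀ * (f z.1 z.2 - f₀ z.1 z.2)) := by
    funext z
    simp only [Function.uncurry, Emic]
    ring
  have hbig : Integrable (Function.uncurry fun x v =>
      ((f x v ^ (1 + 1 / k) - f₀ x v ^ (1 + 1 / k)) * (max (Lfun x v - L₀) 0) ^ (-(l / k))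
        + (Emic M_c f₀ x v - E₀) * (f x v - f₀ x v))) P := by
    rw [heq]
    exact (iA1.sub iA2).add iB
  have step0 : dfun k l L₀ M_c E₀ f f₀ = ∫ z : E3 × E3,
      (Function.uncurry fun x v =>
      ((f x v ^ (1 + 1 / k) - f₀ x v ^ (1 + 1 / k)) * (max (Lfun x v - L₀) 0) ^ (-(l / k))
        + (Emic M_c f₀ x v - E₀) * (f x v - f₀ x v))) z ∂P :=
    integral_integral hbig
  -- now split everything, with explicitly stated (beta-normal) equations
  have s1 : (∫ z : E3 × E3,
      ((f z.1 z.2 ^ (1 + 1 / k) * (max (Lfun z.1 z.2 - L₀) 0) ^ (-(l / k))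
        - f₀ z.1 z.2 ^ (1 + 1 / k) * (max (Lfun z.1 z.2 - L₀) 0) ^ (-(l / k)))
      + (2⁻¹ * (‖z.2‖ ^ 2 * f z.1 z.2) - 2⁻¹ * (‖z.2‖ ^ 2 * f₀ z.1 z.2)
        + (UF f₀ z.1 * f z.1 z.2 - UF f₀ z.1 * f₀ z.1 z.2)
        - ((M_c / ‖z.1‖) * f z.1 z.2 - (M_c / ‖z.1‖) * f₀ z.1 z.2)
        - E₀ * (f z.1 z.2 - f₀ z.1 z.2))) ∂P)
      = ((∫ z : E3 × E3, f z.1 z.2 ^ (1 + 1 / k)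
            * (max (Lfun z.1 z.2 - L₀) 0) ^ (-(l / k)) ∂P)
         - ∫ z : E3 × E3, f₀ z.1 z.2 ^ (1 + 1 / k)
            * (max (Lfun z.1 z.2 - L₀) 0) ^ (-(l / k)) ∂P)
        + ((2⁻¹ * ∫ z : E3 × E3, ‖z.2‖ ^ 2 * f z.1 z.2 ∂P)
          - (2⁻¹ * ∫ z : E3 × E3, ‖z.2‖ ^ 2 * f₀ z.1 z.2 ∂P)
          + ((∫ z : E3 × E3, UF f₀ z.1 * f z.1 z.2 ∂P)
            - ∫ z : E3 × E3, UF f₀ z.1 * f₀ z.1 z.2 ∂P)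
          - ((∫ z : E3 × E3, (M_c / ‖z.1‖) * f z.1 z.2 ∂P)
            - ∫ z : E3 × E3, (M_c / ‖z.1‖) * f₀ z.1 z.2 ∂P)
          - E₀ * ((∫ z : E3 × E3, f z.1 z.2 ∂P) - ∫ z : E3 × E3, f₀ z.1 z.2 ∂P)) := by
    have u1 : (∫ z : E3 × E3, ((f z.1 z.2 ^ (1 + 1 / k) * (max (Lfun z.1 z.2 - L₀) 0) ^ (-(l / k)) - f₀ z.1 z.2 ^ (1 + 1 / k) * (max (Lfun z.1 z.2 - L₀) 0) ^ (-(l / k))) + (2⁻¹ * (‖z.2‖ ^ 2 * f z.1 z.2) - 2⁻¹ * (‖z.2‖ ^ 2 * f₀ z.1 z.2)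
        + (UF f₀ z.1 * f z.1 z.2 - UF f₀ z.1 * f₀ z.1 z.2)
        - ((M_c / ‖z.1‖) * f z.1 z.2 - (M_c / ‖z.1‖) * f₀ z.1 z.2)
        - E₀ * (f z.1 z.2 - f₀ z.1 z.2))) ∂P)
        = (∫ z : E3 × E3, (f z.1 z.2 ^ (1 + 1 / k) * (max (Lfun z.1 z.2 - L₀) 0) ^ (-(l / k)) - f₀ z.1 z.2 ^ (1 + 1 / k) * (max (Lfun z.1 z.2 - L₀) 0) ^ (-(l / k))) ∂P) + ∫ z : E3 × E3, (2⁻¹ * (‖z.2‖ ^ 2 * f z.1 z.2) - 2⁻¹ * (‖z.2‖ ^ 2 * f₀ z.1 z.2)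
        + (UF f₀ z.1 * f z.1 z.2 - UF f₀ z.1 * f₀ z.1 z.2)
        - ((M_c / ‖z.1‖) * f z.1 z.2 - (M_c / ‖z.1‖) * f₀ z.1 z.2)
        - E₀ * (f z.1 z.2 - f₀ z.1 z.2)) ∂P :=
      integral_add (iA1.sub iA2) iB
    have u2 : (∫ z : E3 × E3, (f z.1 z.2 ^ (1 + 1 / k) * (max (Lfun z.1 z.2 - L₀) 0) ^ (-(l / k)) - f₀ z.1 z.2 ^ (1 + 1 / k) * (max (Lfun z.1 z.2 - L₀) 0) ^ (-(l / k))) ∂P) = (∫ z : E3 × E3, f z.1 z.2 ^ (1 + 1 / k) * (max (Lfun z.1 z.2 - L₀) 0) ^ (-(l / k)) ∂P) - ∫ z : E3 × E3, f₀ z.1 z.2 ^ (1 + 1 / k) * (max (Lfun z.1 z.2 - L₀) 0) ^ (-(l / k)) ∂P :=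
      integral_sub iA1 iA2
    have u3 : (∫ z : E3 × E3, (2⁻¹ * (‖z.2‖ ^ 2 * f z.1 z.2) - 2⁻¹ * (‖z.2‖ ^ 2 * f₀ z.1 z.2)
        + (UF f₀ z.1 * f z.1 z.2 - UF f₀ z.1 * f₀ z.1 z.2)
        - ((M_c / ‖z.1‖) * f z.1 z.2 - (M_c / ‖z.1‖) * f₀ z.1 z.2)
        - E₀ * (f z.1 z.2 - f₀ z.1 z.2)) ∂P) = (∫ z : E3 × E3, (2⁻¹ * (‖z.2‖ ^ 2 * f z.1 z.2) - 2⁻¹ * (‖z.2‖ ^ 2 * f₀ z.1 z.2) + (UF f₀ z.1 * f z.1 z.2 - UF f₀ z.1 * f₀ z.1 z.2) - ((M_c / ‖z.1‖) * f z.1 z.2 - (M_c / ‖z.1‖) * f₀ z.1 z.2)) ∂P) - ∫ z : E3 × E3, E₀ * (f z.1 z.2 - f₀ z.1 z.2) ∂P :=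
      integral_sub ((((iK1.const_mul 2⁻¹).sub (iK2.const_mul 2⁻¹)).add
        (iU1.sub iU2)).sub (iC1.sub iC2)) ((iF1.sub iF2).const_mul E₀)
    have u4 : (∫ z : E3 × E3, (2⁻¹ * (‖z.2‖ ^ 2 * f z.1 z.2) - 2⁻¹ * (‖z.2‖ ^ 2 * f₀ z.1 z.2) + (UF f₀ z.1 * f z.1 z.2 - UF f₀ z.1 * f₀ z.1 z.2) - ((M_c / ‖z.1‖) * f z.1 z.2 - (M_c / ‖z.1‖) * f₀ z.1 z.2)) ∂P) = (∫ z : E3 × E3, (2⁻¹ * (‖z.2‖ ^ 2 * f z.1 z.2) - 2⁻¹ * (‖z.2‖ ^ 2 * f₀ z.1 z.2) + (UF f₀ z.1 * f z.1 z.2 - UF f₀ z.1 * f₀ z.1 z.2)) ∂P) - ∫ z : E3 × E3, ((M_c / ‖z.1‖) * f z.1 z.2 - (M_c / ‖z.1‖) * f₀ z.1 z.2) ∂P :=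
      integral_sub (((iK1.const_mul 2⁻¹).sub (iK2.const_mul 2⁻¹)).add
        (iU1.sub iU2)) (iC1.sub iC2)
    have u5 : (∫ z : E3 × E3, (2⁻¹ * (‖z.2‖ ^ 2 * f z.1 z.2) - 2⁻¹ * (‖z.2‖ ^ 2 * f₀ z.1 z.2) + (UF f₀ z.1 * f z.1 z.2 - UF f₀ z.1 * f₀ z.1 z.2)) ∂P) = (∫ z : E3 × E3, (2⁻¹ * (‖z.2‖ ^ 2 * f z.1 z.2) - 2⁻¹ * (‖z.2‖ ^ 2 * f₀ z.1 z.2)) ∂P) + ∫ z : E3 × E3, (UF f₀ z.1 * f z.1 z.2 - UF f₀ z.1 * f₀ z.1 z.2) ∂P :=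
      integral_add ((iK1.const_mul 2⁻¹).sub (iK2.const_mul 2⁻¹)) (iU1.sub iU2)
    have u6 : (∫ z : E3 × E3, (2⁻¹ * (‖z.2‖ ^ 2 * f z.1 z.2) - 2⁻¹ * (‖z.2‖ ^ 2 * f₀ z.1 z.2)) ∂P) = (∫ z : E3 × E3, 2⁻¹ * (‖z.2‖ ^ 2 * f z.1 z.2) ∂P) - ∫ z : E3 × E3, 2⁻¹ * (‖z.2‖ ^ 2 * f₀ z.1 z.2) ∂P :=
      integral_sub (iK1.const_mul 2⁻¹) (iK2.const_mul 2⁻¹)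
    have u7 : (∫ z : E3 × E3, (UF f₀ z.1 * f z.1 z.2 - UF f₀ z.1 * f₀ z.1 z.2) ∂P) = (∫ z : E3 × E3, UF f₀ z.1 * f z.1 z.2 ∂P) - ∫ z : E3 × E3, UF f₀ z.1 * f₀ z.1 z.2 ∂P :=
      integral_sub iU1 iU2
    have u8 : (∫ z : E3 × E3, ((M_c / ‖z.1‖) * f z.1 z.2 - (M_c / ‖z.1‖) * f₀ z.1 z.2) ∂P) = (∫ z : E3 × E3, (M_c / ‖z.1‖) * f z.1 z.2 ∂P) - ∫ z : E3 × E3, (M_c / ‖z.1‖) * f₀ z.1 z.2 ∂P :=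
      integral_sub iC1 iC2
    have u9 : (∫ z : E3 × E3, E₀ * (f z.1 z.2 - f₀ z.1 z.2) ∂P) = E₀ * ∫ z : E3 × E3, (f z.1 z.2 - f₀ z.1 z.2) ∂P :=
      integral_const_mul _ _
    have u10 : (∫ z : E3 × E3, (f z.1 z.2 - f₀ z.1 z.2) ∂P) = (∫ z : E3 × E3, f z.1 z.2 ∂P) - ∫ z : E3 × E3, f₀ z.1 z.2 ∂P :=
      integral_sub iF1 iF2
    have u11 : (∫ z : E3 × E3, 2⁻¹ * (‖z.2‖ ^ 2 * f z.1 z.2) ∂P) = 2⁻¹ * ∫ z : E3 × E3, ‖z.2‖ ^ 2 * f z.1 z.2 ∂P := integral_const_mul _ _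
    have u12 : (∫ z : E3 × E3, 2⁻¹ * (‖z.2‖ ^ 2 * f₀ z.1 z.2) ∂P) = 2⁻¹ * ∫ z : E3 × E3, ‖z.2‖ ^ 2 * f₀ z.1 z.2 ∂P := integral_const_mul _ _
    rw [u1, u2, u3, u4, u5, u6, u7, u8, u9, u10, u11, u12]
  have eA1 : ∫ z : E3 × E3, f z.1 z.2 ^ (1 + 1 / k)
      * (max (Lfun z.1 z.2 - L₀) 0) ^ (-(l / k)) ∂P = Cas k l L₀ f :=
    (integral_integral (f := fun x v => f x v ^ (1 + 1 / k)
      * (max (Lfun x v - L₀) 0) ^ (-(l / k))) iA1).symm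
  have eA2 : ∫ z : E3 × E3, f₀ z.1 z.2 ^ (1 + 1 / k)
      * (max (Lfun z.1 z.2 - L₀) 0) ^ (-(l / k)) ∂P = Cas k l L₀ f₀ :=
    (integral_integral (f := fun x v => f₀ x v ^ (1 + 1 / k)
      * (max (Lfun x v - L₀) 0) ^ (-(l / k))) iA2).symm
  have eK1 : ∫ z : E3 × E3, ‖z.2‖ ^ 2 * f z.1 z.2 ∂P = ∫ x, ∫ v, ‖v‖ ^ 2 * f x v :=
    (integral_integral (f := fun x v => ‖v‖ ^ 2 * f x v) iK1).symm
  have eK2 : ∫ z : E3 × E3, ‖z.2‖ ^ 2 * f₀ z.1 z.2 ∂P = ∫ x, ∫ v, ‖v‖ ^ 2 * f₀ x v :=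
    (integral_integral (f := fun x v => ‖v‖ ^ 2 * f₀ x v) iK2).symm
  have eU1 : ∫ z : E3 × E3, UF f₀ z.1 * f z.1 z.2 ∂P = ∫ x, UF f₀ x * rhoF f x := by
    rw [(integral_integral (f := fun x v => UF f₀ x * f x v) iU1).symm]
    exact integral_congr_ae (Filter.Eventually.of_forall fun x => integral_const_mul _ _)
  have eU2 : ∫ z : E3 × E3, UF f₀ z.1 * f₀ z.1 z.2 ∂P = ∫ x, UF f₀ x * rhoF f₀ x := by
    rw [(integral_integral (f := fun x v => UF f₀ x * f₀ x v) iU2).symm]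
    exact integral_congr_ae (Filter.Eventually.of_forall fun x => integral_const_mul _ _)
  have eC1 : ∫ z : E3 × E3, (M_c / ‖z.1‖) * f z.1 z.2 ∂P
      = ∫ x, (M_c / ‖x‖) * rhoF f x := by
    rw [(integral_integral (f := fun x v => (M_c / ‖x‖) * f x v) iC1).symm]
    exact integral_congr_ae (Filter.Eventually.of_forall fun x => integral_const_mul _ _)
  have eC2 : ∫ z : E3 × E3, (M_c / ‖z.1‖) * f₀ z.1 z.2 ∂P
      = ∫ x, (M_c / ‖x‖) * rhoF f₀ x := by
    rw [(integral_integral (f := fun x v => (M_c / ‖x‖) * f₀ x v) iC2).symm]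
    exact integral_congr_ae (Filter.Eventually.of_forall fun x => integral_const_mul _ _)
  have eF1 : ∫ z : E3 × E3, f z.1 z.2 ∂P = M := by
    rw [(integral_integral (f := fun x v => f x v) iF1).symm]
    exact hNf.mass
  have eF2 : ∫ z : E3 × E3, f₀ z.1 z.2 ∂P = M := by
    rw [(integral_integral (f := fun x v => f₀ x v) iF2).symm]
    exact hN₀.mass
  rw [step0]
  simp only [heq]
  rw [s1, eA1, eA2, eK1, eK2, eU1, eU2, eC1, eC2, eF1, eF2, Ekin, Ekin]
  ring

end assembly

end HCP

theorem HC_expansion (k l L₀ M M_c E₀ : ℝ) (hk : 0 < k) (hkl : k ≤ l)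
    (hL₀ : 0 < L₀) (hM : 0 < M) (hMc : 0 < M_c)
    (f₀ : E3 → E3 → ℝ) (hf₀ : FM k l L₀ M f₀)
    (hmin : ∀ g, FM k l L₀ M g → HC k l L₀ M_c f₀ ≤ HC k l L₀ M_c g)
    (f : E3 → E3 → ℝ) (hf : FM k l L₀ M f) :
    HC k l L₀ M_c f - HC k l L₀ M_c f₀ =
      dfun k l L₀ M_c E₀ f f₀
        - (1 / (8 * π)) * ∫ x, ‖gradUF f x - gradUF f₀ x‖ ^ 2 := by
  obtain ⟨hmeas, hpos, -, hint, hmass, hkin, hcasf, hsupp⟩ := hf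
  obtain ⟨hmeas₀, hpos₀, -, hint₀, hmass₀, hkin₀, hcasf₀, hsupp₀⟩ := hf₀
  have hNf : HCP.Nice L₀ M f := ⟨hmeas, hpos, hint, hmass, hkin, hsupp⟩
  have hN₀ : HCP.Nice L₀ M f₀ := ⟨hmeas₀, hpos₀, hint₀, hmass₀, hkin₀, hsupp₀⟩
  have hM0 : (0:ℝ) ≤ M := hM.le
  have hMc0 : (0:ℝ) ≤ M_c := hMc.le
  rw [HCP.dfun_eq hL₀ hM0 hMc0 hNf hN₀ E₀ hcasf hcasf₀]
  -- Green / Poisson identities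
  have hB : (∫ x, ‖gradUF f₀ x‖ ^ 2)
      = (4*π) * ∫ s in Set.Ioi (0:ℝ), mF f₀ s * mF f₀ s / s ^ 2 := by
    have h1 : (fun x : E3 => ‖gradUF f₀ x‖ ^ 2)
        = fun x => (inner ℝ (gradUF f₀ x) (gradUF f₀ x) : ℝ) :=
      funext fun x => (real_inner_self_eq_norm_sq _).symm
    rw [h1]
    exact HCP.inner_eq hL₀ hM0 hN₀ hN₀
  have hC : (∫ x, (inner ℝ (gradUF f₀ x) (gradUF f x) : ℝ))
      = (4*π) * ∫ s in Set.Ioi (0:ℝ), mF f₀ s * mF f s / s ^ 2 :=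
    HCP.inner_eq hL₀ hM0 hN₀ hNf
  have hUrf : (∫ x, UF f₀ x * rhoF f x)
      = -∫ s in Set.Ioi (0:ℝ), mF f₀ s * mF f s / s ^ 2 :=
    HCP.Urho_eq hL₀ hM0 hN₀ hNf
  have hUr0 : (∫ x, UF f₀ x * rhoF f₀ x)
      = -∫ s in Set.Ioi (0:ℝ), mF f₀ s * mF f₀ s / s ^ 2 :=
    HCP.Urho_eq hL₀ hM0 hN₀ hN₀
  have iNf := HCP.normsq_int hL₀ hM0 hNf
  have iN₀ := HCP.normsq_int hL₀ hM0 hN₀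
  have iIn := HCP.inner_int hL₀ hM0 hN₀ hNf
  have hD : (∫ x, ‖gradUF f x - gradUF f₀ x‖ ^ 2)
      = (∫ x, ‖gradUF f x‖ ^ 2)
        - 2 * (∫ x, (inner ℝ (gradUF f₀ x) (gradUF f x) : ℝ))
        + ∫ x, ‖gradUF f₀ x‖ ^ 2 := by
    have hptw : (fun x : E3 => ‖gradUF f x - gradUF f₀ x‖ ^ 2)
        = fun x => ‖gradUF f x‖ ^ 2
          - 2 * (inner ℝ (gradUF f₀ x) (gradUF f x) : ℝ) + ‖gradUF f₀ x‖ ^ 2 :=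
      funext fun x => by rw [norm_sub_sq_real, real_inner_comm]
    have w1 : (∫ x, (‖gradUF f x‖ ^ 2
          - 2 * (inner ℝ (gradUF f₀ x) (gradUF f x) : ℝ) + ‖gradUF f₀ x‖ ^ 2))
        = (∫ x, (‖gradUF f x‖ ^ 2
            - 2 * (inner ℝ (gradUF f₀ x) (gradUF f x) : ℝ)))
          + ∫ x, ‖gradUF f₀ x‖ ^ 2 :=
      integral_add (iNf.sub (iIn.const_mul 2)) iN₀
    have w2 : (∫ x, (‖gradUF f x‖ ^ 2
          - 2 * (inner ℝ (gradUF f₀ x) (gradUF f x) : ℝ)))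
        = (∫ x, ‖gradUF f x‖ ^ 2)
          - ∫ x, 2 * (inner ℝ (gradUF f₀ x) (gradUF f x) : ℝ) :=
      integral_sub iNf (iIn.const_mul 2)
    have w3 : (∫ x, 2 * (inner ℝ (gradUF f₀ x) (gradUF f x) : ℝ))
        = 2 * ∫ x, (inner ℝ (gradUF f₀ x) (gradUF f x) : ℝ) := integral_const_mul _ _
    rw [hptw, w1, w2, w3]
  simp only [HC, Epot]
  rw [hD, hB, hC, hUrf, hUr0]
  have hπ : (π : ℝ) ≠ 0 := Real.pi_ne_zero
  field_simp
  ring
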